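/- arXiv:2208.13428 — 3 statements merged into one kernel-verified Lean document; each statement's English description precedes it below -/
import Mathlib

section
/- If (i,c) reaches (i',c') in exactly |CM|+1 steps of a one-counter machine CM and (i',c') is not halting, then c < c'. -/
def ValidCm (M : List (ℕ × ℕ)) : Prop := ∀ jd ∈ M, 1 ≤ jd.2 ∧ jd.2 ≤ 4

inductive CmStep (M : List (ℕ × ℕ)) : ℕ × ℕ → ℕ × ℕ → Prop
  | halt (i c : ℕ) : M.length ≤ i → CmStep M (i, c) (i, c)
  | div (i c j d : ℕ) : M[i]? = some (j, d) → d ∣ c →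
      CmStep M (i, c) (j, c * (d + 1) / d)
  | ndiv (i c j d : ℕ) : M[i]? = some (j, d) → ¬ d ∣ c →
      CmStep M (i, c) (i + 1, c)


def CmStepN (M : List (ℕ × ℕ)) : ℕ → ℕ × ℕ → ℕ × ℕ → Prop
  | 0, x, y => y = x
  | n + 1, x, y => ∃ z, CmStep M x z ∧ CmStepN M n z y

lemma cmStep_bound (M : List (ℕ × ℕ)) (hM : ValidCm M) {i c j c2 : ℕ}
    (h : CmStep M (i, c) (j, c2)) (hc : 0 < c) : c ≤ c2 ∧ 0 < c2 := by
  cases h with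
  | halt => exact ⟨le_refl _, hc⟩
  | div i c j d hget hdvd =>
    have hd : 1 ≤ d := (hM _ (List.mem_of_getElem? hget)).1
    obtain ⟨k, hk⟩ := hdvd
    subst hk
    rw [mul_assoc, Nat.mul_div_cancel_left _ (by omega : 0 < d)]
    constructor <;> nlinarith
  | ndiv => exact ⟨le_refl _, hc⟩

lemma cmStep_strict (M : List (ℕ × ℕ)) (hM : ValidCm M) {i c j d : ℕ}
    (hget : M[i]? = some (j, d)) (hdvd : d ∣ c) (hc : 0 < c) :
    c < c * (d + 1) / d := by
  have hd : 1 ≤ d := (hM _ (List.mem_of_getElem? hget)).1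
  obtain ⟨k, hk⟩ := hdvd
  subst hk
  rw [mul_assoc, Nat.mul_div_cancel_left _ (by omega : 0 < d)]
  nlinarith

lemma cmStepN_bound (M : List (ℕ × ℕ)) (hM : ValidCm M) :
    ∀ (n : ℕ) {i c i' c' : ℕ}, CmStepN M n (i, c) (i', c') → 0 < c →
      c ≤ c' ∧ 0 < c' := by
  intro n
  induction n with
  | zero =>
    intro i c i' c' h hc
    cases h
    exact ⟨le_refl _, hc⟩
  | succ n ih =>
    rintro i c i' c' ⟨⟨j, c2⟩, hs, hrest⟩ hc
    obtain ⟨h1, h2⟩ := cmStep_bound M hM hs hc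
    obtain ⟨h3, h4⟩ := ih hrest h2
    exact ⟨le_trans h1 h3, h4⟩

lemma cmStepN_halt (M : List (ℕ × ℕ)) :
    ∀ (n : ℕ) {i c i' c' : ℕ}, M.length ≤ i → CmStepN M n (i, c) (i', c') →
      i' = i ∧ c' = c := by
  intro n
  induction n with
  | zero =>
    intro i c i' c' hle h
    cases h; exact ⟨rfl, rfl⟩
  | succ n ih =>
    rintro i c i' c' hle ⟨⟨j, c2⟩, hs, hrest⟩
    cases hs with
    | halt => exact ih hle hrest
    | div _ _ _ _ hget => rw [List.getElem?_eq_none_iff.mpr hle] at hget; cases hget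
    | ndiv _ _ _ _ hget => rw [List.getElem?_eq_none_iff.mpr hle] at hget; cases hget

lemma cm_aux (M : List (ℕ × ℕ)) (hM : ValidCm M) :
    ∀ (n i c i' c' : ℕ), 0 < c → CmStepN M n (i, c) (i', c') →
      ¬ M.length ≤ i' → M.length < i + n → c < c' := by
  intro n
  induction n with
  | zero =>
    intro i c i' c' hc h hnh hlen
    cases h
    omega
  | succ n ih =>
    rintro i c i' c' hc ⟨⟨j, c2⟩, hs, hrest⟩ hnh hlen
    cases hs with
    | halt _ _ hle =>
      obtain ⟨h1, _⟩ := cmStepN_halt M n hle hrest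
      omega
    | div _ _ _ d hget hdvd =>
      have h1 := cmStep_strict M hM hget hdvd hc
      have h2 := cmStepN_bound M hM n hrest (by omega)
      omega
    | ndiv _ _ _ _ hget hdvd =>
      exact ih (i + 1) c i' c' hc hrest hnh (by omega)

theorem cm_stepN_strict_monotone (M : List (ℕ × ℕ)) (hM : ValidCm M)
    (i c i' c' : ℕ) (hc : 0 < c)
    (h : CmStepN M (M.length + 1) (i, c) (i', c')) (hnh : ¬ M.length ≤ i') :
    c < c' := cm_aux M hM (M.length + 1) i c i' c' hc h hnh (by omega)
end

section
/- A configuration (i,c) terminates in a one-counter machine CM if and only if there exists k : ℕ such that every configuration (i',c') reachable from (i,c) satisfies c' < k. -/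
def CmReach (M : List (ℕ × ℕ)) : ℕ × ℕ → ℕ × ℕ → Prop :=
  Relation.ReflTransGen (CmStep M)

lemma cm_div_val {c d : ℕ} (hd : 1 ≤ d) (hdc : d ∣ c) :
    c * (d + 1) / d = c + c / d := by
  obtain ⟨e, rfl⟩ := hdc
  have h1 : d * e * (d + 1) = d * (e * (d + 1)) := by ring
  rw [h1, Nat.mul_div_cancel_left _ hd, Nat.mul_div_cancel_left _ hd]
  ring

lemma cm_step_mono {M : List (ℕ × ℕ)} (hM : ValidCm M) {p q : ℕ × ℕ}
    (h : CmStep M p q) : p.2 ≤ q.2 := by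
  cases h with
  | halt i c _ => exact le_refl _
  | div i c j d hget hdc =>
    have hd : 1 ≤ d := (hM _ (List.mem_of_getElem? hget)).1
    simp only [cm_div_val hd hdc]
    exact Nat.le_add_right _ _
  | ndiv i c j d hget hdc => exact le_refl _

lemma cm_reach_mono {M : List (ℕ × ℕ)} (hM : ValidCm M) {p q : ℕ × ℕ}
    (h : CmReach M p q) : p.2 ≤ q.2 := by
  induction h with
  | refl => exact le_refl _
  | tail _ hstep ih => exact ih.trans (cm_step_mono hM hstep)

lemma cm_reach_pos {M : List (ℕ × ℕ)} (hM : ValidCm M) {p q : ℕ × ℕ}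
    (h : CmReach M p q) (hp : 0 < p.2) : 0 < q.2 :=
  Nat.lt_of_lt_of_le hp (cm_reach_mono hM h)

lemma cm_step_det {M : List (ℕ × ℕ)} : Relator.RightUnique (CmStep M) := by
  intro p q q' h h'
  cases h with
  | halt i c hi =>
    cases h' with
    | halt => rfl
    | div i c j d hget _ => rw [List.getElem?_eq_none_iff.2 hi] at hget; cases hget
    | ndiv i c j d hget _ => rw [List.getElem?_eq_none_iff.2 hi] at hget; cases hget
  | div i c j d hget hdc =>
    cases h' with
    | halt _ _ hi => rw [List.getElem?_eq_none_iff.2 hi] at hget; cases hget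
    | div _ _ j' d' hget' hdc' =>
      rw [hget] at hget'; cases hget'; rfl
    | ndiv _ _ j' d' hget' hdc' =>
      rw [hget] at hget'; cases hget'; exact absurd hdc hdc'
  | ndiv i c j d hget hdc =>
    cases h' with
    | halt _ _ hi => rw [List.getElem?_eq_none_iff.2 hi] at hget; cases hget
    | div _ _ j' d' hget' hdc' =>
      rw [hget] at hget'; cases hget'; exact absurd hdc' hdc
    | ndiv _ _ j' d' hget' hdc' => rfl

lemma cm_halt_fix {M : List (ℕ × ℕ)} {p q : ℕ × ℕ}
    (h : CmReach M p q) (hp : M.length ≤ p.1) : q = p := by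
  induction h with
  | refl => rfl
  | tail _ hstep ih =>
    subst ih
    cases hstep with
    | halt => rfl
    | div i c j d hget _ => rw [List.getElem?_eq_none_iff.2 hp] at hget; cases hget
    | ndiv i c j d hget _ => rw [List.getElem?_eq_none_iff.2 hp] at hget; cases hget

theorem cm_terminates_iff_bounded (M : List (ℕ × ℕ)) (hM : ValidCm M)
    (i c : ℕ) (hc : 0 < c) :
    (∃ i' c', CmReach M (i, c) (i', c') ∧ M.length ≤ i') ↔
      ∃ k : ℕ, ∀ i' c', CmReach M (i, c) (i', c') → c' < k := by
  constructor
  · rintro ⟨i', c', hreach, hhalt⟩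
    refine ⟨c' + 1, fun a b hab => ?_⟩
    rcases Relation.ReflTransGen.total_of_right_unique cm_step_det hab hreach with h | h
    · have := cm_reach_mono hM h
      simpa using Nat.lt_succ_of_le this
    · have := cm_halt_fix h hhalt
      simp only [Prod.mk.injEq] at this
      omega
  · rintro ⟨k, hk⟩
    by_contra hno
    push_neg at hno
    set L := M.length with hL
    have hLpos : 0 < L := by
      have := hno i c Relation.ReflTransGen.refl
      omega
    -- every reachable config can take a measure-increasing step
    have key : ∀ n : ℕ, ∃ a b, CmReach M (i, c) (a, b) ∧ n ≤ b * L + a := by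
      intro n
      induction n with
      | zero => exact ⟨i, c, Relation.ReflTransGen.refl, Nat.zero_le _⟩
      | succ n ih =>
        obtain ⟨a, b, hab, hn⟩ := ih
        have ha : a < L := hno a b hab
        have hbpos : 0 < b := cm_reach_pos hM hab hc
        obtain ⟨⟨j, d⟩, hget⟩ : ∃ jd, M[a]? = some jd :=
          ⟨M[a], List.getElem?_eq_getElem ha⟩
        by_cases hdc : d ∣ b
        · refine ⟨j, b * (d + 1) / d, hab.tail (CmStep.div a b j d hget hdc), ?_⟩
          have hd : 1 ≤ d := (hM _ (List.mem_of_getElem? hget)).1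
          rw [cm_div_val hd hdc]
          have : 1 ≤ b / d := Nat.one_le_div_iff hd |>.2 (Nat.le_of_dvd hbpos hdc)
          have : (b + b / d) * L ≥ b * L + L := by nlinarith
          omega
        · exact ⟨a + 1, b, hab.tail (CmStep.ndiv a b j d hget hdc), by omega⟩
    obtain ⟨a, b, hab, hn⟩ := key (k * L)
    have ha : a < L := hno a b hab
    have hb : b < k := hk a b hab
    nlinarith
end

section
/- Right-uniform two-inequality semi-unification many-one reduces to left-uniform two-inequality semi-unification: given terms σ0, σ1, τ, setting σ' = σ0 → σ1, τ0' = τ → α1, τ1' = α0 → τ for fresh variables α0, α1 not occurring in σ0, σ1, τ, there exist substitutions φ, ψ0, ψ1 with ψ0(φ(σ0)) = φ(τ) and ψ1(φ(σ1)) = φ(τ) if and only if there exist substitutions φ', ψ0', ψ1' with ψ0'(φ'(σ')) = φ'(τ0') and ψ1'(φ'(σ')) = φ'(τ1'). -/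
inductive Tm
  | var : ℕ → Tm
  | arr : Tm → Tm → Tm

def subst (f : ℕ → Tm) : Tm → Tm
  | .var x => f x
  | .arr s t => .arr (subst f s) (subst f t)

def Tm.size : Tm → ℕ
  | .var _ => 1
  | .arr s t => 1 + s.size + t.size

def occurs (x : ℕ) : Tm → Prop
  | .var y => x = y
  | .arr s t => occurs x s ∨ occurs x t

/-! Since `α₀` and `α₁` are fresh, `φ'` may be chosen freely on them: sending `α₀` to
`ψ₁(φ σ₀)` and `α₁` to `ψ₀(φ σ₁)` makes the arrow equations hold componentwise, while
conversely the components of the arrow equations are the two original ones. -/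

theorem subst_congr {f g : ℕ → Tm} {t : Tm} (h : ∀ x, occurs x t → f x = g x) :
    subst f t = subst g t := by
  induction t with
  | var x => exact h x rfl
  | arr s t ihs iht =>
      rw [subst, subst, ihs fun x hx => h x (Or.inl hx), iht fun x hx => h x (Or.inr hx)]

theorem subst_update_of_not_occurs {φ : ℕ → Tm} {α : ℕ} {s t : Tm} (h : ¬ occurs α s) :
    subst (Function.update φ α t) s = subst φ s :=
  subst_congr fun _ hx => Function.update_of_ne (by rintro rfl; exact h hx) _ _

theorem ru2_to_lu2 (σ₀ σ₁ τ : Tm) (α₀ α₁ : ℕ) (hne : α₀ ≠ α₁)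
    (h00 : ¬ occurs α₀ σ₀) (h01 : ¬ occurs α₀ σ₁) (h0t : ¬ occurs α₀ τ)
    (h10 : ¬ occurs α₁ σ₀) (h11 : ¬ occurs α₁ σ₁) (h1t : ¬ occurs α₁ τ) :
    (∃ φ ψ₀ ψ₁ : ℕ → Tm,
        subst ψ₀ (subst φ σ₀) = subst φ τ ∧
        subst ψ₁ (subst φ σ₁) = subst φ τ) ↔
    (∃ φ' ψ₀' ψ₁' : ℕ → Tm,
        subst ψ₀' (subst φ' (.arr σ₀ σ₁)) = subst φ' (.arr τ (.var α₁)) ∧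
        subst ψ₁' (subst φ' (.arr σ₀ σ₁)) = subst φ' (.arr (.var α₀) τ)) := by
  constructor
  · rintro ⟨φ, ψ₀, ψ₁, h₀, h₁⟩
    let φ' := Function.update (Function.update φ α₀ (subst ψ₁ (subst φ σ₀))) α₁
      (subst ψ₀ (subst φ σ₁))
    have hφ' {s : Tm} (hs₀ : ¬ occurs α₀ s) (hs₁ : ¬ occurs α₁ s) : subst φ' s = subst φ s := by
      rw [subst_update_of_not_occurs hs₁, subst_update_of_not_occurs hs₀]
    have hα₀ : φ' α₀ = subst ψ₁ (subst φ σ₀) := by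
      simp only [φ', Function.update_of_ne hne, Function.update_self]
    have hα₁ : φ' α₁ = subst ψ₀ (subst φ σ₁) := Function.update_self ..
    refine ⟨φ', ψ₀, ψ₁, ?_, ?_⟩ <;>
      simp only [subst, hφ' h00 h10, hφ' h01 h11, hφ' h0t h1t, hα₀, hα₁, h₀, h₁]
  · rintro ⟨φ', ψ₀', ψ₁', h₀, h₁⟩
    simp only [subst, Tm.arr.injEq] at h₀ h₁
    exact ⟨φ', ψ₀', ψ₁', h₀.1, h₁.2⟩
end
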